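/- Suppose the cost function c satisfies Assumption A and let ψ ∈ C(Y). Then the function (s,t) ↦ (1/t)∫_0^t ψ^c(s,p) dp tends to +∞ as t → +∞, uniformly in s ∈ B; that is, for every M > 0 there exists T > 0 such that for all t ≥ T and all s ∈ B, (1/t)∫_0^t ψ^c(s,p) dp ≥ M. -/

import Mathlib

/-!
For each fixed height `p` the cost `(s, y) ↦ c((s,p),y)` is continuous on the compact set `B × Y`
(it is locally Lipschitz) and it increases to `+∞` with `p` at every point, so by compactness it
exceeds any bound `R` for all `p ≥ P`, uniformly on `B × Y`. As `ψ ≤ C` on `Y`, the `c`-transform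
`p ↦ ψ^c(s,p)` is then monotone, at least `-C` everywhere and at least `M + 1` beyond `P`;
splitting `∫₀ᵗ` at `P` bounds the average below by `M` once `t ≥ P (M + 1 + C)`.
-/

open MeasureTheory Set Filter Topology

noncomputable section

/-- The ambient source space `ℝ^{d-1} × ℝ` (with `n = d - 1`). -/
abbrev ESrc (n : ℕ) := EuclideanSpace ℝ (Fin n) × ℝ

/-- The ambient target space `ℝ^d` (with `n = d - 1`). -/
abbrev ETgt (n : ℕ) := EuclideanSpace ℝ (Fin (n + 1))

/-- Assumption A on the cost function `c : X × Y → [0,∞)`, where `X = B × [0,∞)`: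
(nonnegativity,) local Lipschitz continuity, strict monotonicity and unboundedness in the
vertical variable, and equicontinuity in the horizontal variable. -/
structure AssumptionA {n : ℕ} (B : Set (EuclideanSpace ℝ (Fin n))) (Y : Set (ETgt n))
    (c : ESrc n → ETgt n → ℝ) : Prop where
  nonneg : ∀ x ∈ B ×ˢ Ici (0:ℝ), ∀ y ∈ Y, 0 ≤ c x y
  locLip : ∀ z ∈ (B ×ˢ Ici (0:ℝ)) ×ˢ Y, ∃ ε > 0, ∃ K : NNReal,
    LipschitzOnWith K (fun q : ESrc n × ETgt n => c q.1 q.2)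
      (((B ×ˢ Ici (0:ℝ)) ×ˢ Y) ∩ Metric.ball z ε)
  strictMonoOn : ∀ s ∈ B, ∀ y ∈ Y, StrictMonoOn (fun t : ℝ => c (s, t) y) (Ici (0:ℝ))
  unbounded : ∀ s ∈ B, ∀ y ∈ Y, ∀ M : ℝ, ∃ t : ℝ, 0 ≤ t ∧ M ≤ c (s, t) y
  equicontinuous : EquicontinuousOn
    (fun i : ↥(Ici (0:ℝ)) × ↥Y => fun s : EuclideanSpace ℝ (Fin n) =>
      c (s, (i.1 : ℝ)) (i.2 : ETgt n)) B

/-- A probability density on `B` (an element of `P_ac(B)`, identified with its density). -/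
structure IsDensity {n : ℕ} (B : Set (EuclideanSpace ℝ (Fin n)))
    (ρ : EuclideanSpace ℝ (Fin n) → ℝ) : Prop where
  measurable : Measurable ρ
  nonneg : ∀ s, 0 ≤ ρ s
  zero_outside : ∀ s ∉ B, ρ s = 0
  integral_one : ∫ s, ρ s = 1

/-- The region `X_{p̄} = {(s,t) : s ∈ B, 0 ≤ t ≤ p̄(s)}` under the graph of `ρ`. -/
def subgraph {n : ℕ} (B : Set (EuclideanSpace ℝ (Fin n)))
    (ρ : EuclideanSpace ℝ (Fin n) → ℝ) : Set (ESrc n) :=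
  {x : ESrc n | x.1 ∈ B ∧ 0 ≤ x.2 ∧ x.2 ≤ ρ x.1}

/-- The measure `μ_{p̄}`: Lebesgue measure restricted to `X_{p̄}`. -/
def muOf {n : ℕ} (B : Set (EuclideanSpace ℝ (Fin n)))
    (ρ : EuclideanSpace ℝ (Fin n) → ℝ) : Measure (ESrc n) :=
  volume.restrict (subgraph B ρ)

/-- `γ` is a coupling (transport plan) between `μ` and `ν`. -/
def IsCoupling {α β : Type*} [MeasurableSpace α] [MeasurableSpace β]
    (μ : Measure α) (ν : Measure β) (γ : Measure (α × β)) : Prop :=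
  γ.map Prod.fst = μ ∧ γ.map Prod.snd = ν

/-- The optimal transport (Kantorovich) cost `T_c(μ,ν)`. -/
def transportCost {α β : Type*} [MeasurableSpace α] [MeasurableSpace β]
    (c : α → β → ℝ) (μ : Measure α) (ν : Measure β) : ℝ :=
  sInf {r : ℝ | ∃ γ : Measure (α × β), IsCoupling μ ν γ ∧ r = ∫ z, c z.1 z.2 ∂γ}

/-- `γ` is an optimal transport plan from `μ` to `ν` for the cost `c`. -/
def IsOptimalPlan {α β : Type*} [MeasurableSpace α] [MeasurableSpace β]
    (c : α → β → ℝ) (μ : Measure α) (ν : Measure β) (γ : Measure (α × β)) : Prop :=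
  IsCoupling μ ν γ ∧ ∀ γ' : Measure (α × β), IsCoupling μ ν γ' →
    ∫ z, c z.1 z.2 ∂γ ≤ ∫ z, c z.1 z.2 ∂γ'

/-- `T` is an optimal transport map from `μ` to `ν` for the cost `c`. -/
def IsOptimalMap {α β : Type*} [MeasurableSpace α] [MeasurableSpace β]
    (c : α → β → ℝ) (μ : Measure α) (ν : Measure β) (T : α → β) : Prop :=
  Measurable T ∧ μ.map T = ν ∧ ∀ T' : α → β, Measurable T' → μ.map T' = ν →
    ∫ x, c x (T x) ∂μ ≤ ∫ x, c x (T' x) ∂μ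

/-- The `c`-transform `ψ^c(x) = min_{y ∈ Y} (c(x,y) - ψ(y))`. -/
def ctransform {α β : Type*} (c : α → β → ℝ) (Y : Set β) (ψ : β → ℝ) (x : α) : ℝ :=
  sInf ((fun y => c x y - ψ y) '' Y)

/-- The Kantorovich dual functional `K(ψ; μ, ν) = ∫ ψ^c dμ + ∫ ψ dν`. -/
def Kfun {α β : Type*} [MeasurableSpace α] [MeasurableSpace β]
    (c : α → β → ℝ) (Y : Set β) (ψ : β → ℝ) (μ : Measure α) (ν : Measure β) : ℝ :=
  ∫ x, ctransform c Y ψ x ∂μ + ∫ y, ψ y ∂ν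

/-- `ψ` is a Kantorovich potential from `μ` to `ν`: a continuous maximiser of the
Kantorovich dual functional over `C(Y)`. -/
def IsKantorovichPotential {α β : Type*} [MeasurableSpace α] [MeasurableSpace β]
    [TopologicalSpace β] (c : α → β → ℝ) (Y : Set β) (ψ : β → ℝ) (μ : Measure α) (ν : Measure β) : Prop :=
  ContinuousOn ψ Y ∧ ∀ φ : β → ℝ, ContinuousOn φ Y → Kfun c Y φ μ ν ≤ Kfun c Y ψ μ ν

/-- The primal functional `F_ν(p̄) = T_c(μ_{p̄}, ν)`. -/
def Fprimal {n : ℕ} (c : ESrc n → ETgt n → ℝ) (B : Set (EuclideanSpace ℝ (Fin n)))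
    (ν : Measure (ETgt n)) (ρ : EuclideanSpace ℝ (Fin n) → ℝ) : ℝ :=
  transportCost c (muOf B ρ) ν

/-- The dual functional `G_ν(ψ) = inf_{p̄ ∈ P_ac(B)} K(ψ; μ_{p̄}, ν)`. -/
def Gdual {n : ℕ} (c : ESrc n → ETgt n → ℝ) (B : Set (EuclideanSpace ℝ (Fin n)))
    (Y : Set (ETgt n)) (ν : Measure (ETgt n)) (ψ : ETgt n → ℝ) : ℝ :=
  sInf {r : ℝ | ∃ ρ, IsDensity B ρ ∧ r = Kfun c Y ψ (muOf B ρ) ν}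

/-- `q(s,y,σ) = max {0, inf {t ≥ 0 : c((s,t),y) ≥ σ}}`, the generalized inverse of
`t ↦ c((s,t),y)`. -/
def qfun {n : ℕ} (c : ESrc n → ETgt n → ℝ) (s : EuclideanSpace ℝ (Fin n))
    (y : ETgt n) (σ : ℝ) : ℝ :=
  max 0 (sInf {t : ℝ | 0 ≤ t ∧ σ ≤ c (s, t) y})

/-- The candidate optimal surface `p̄_ψ(s) = max_{y ∈ Y} q(s, y, ψ(y) + τ)`. -/
def pbar {n : ℕ} (c : ESrc n → ETgt n → ℝ) (Y : Set (ETgt n)) (ψ : ETgt n → ℝ)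
    (τ : ℝ) (s : EuclideanSpace ℝ (Fin n)) : ℝ :=
  sSup ((fun y => qfun c s y (ψ y + τ)) '' Y)

theorem IsCompact.eventually_forall_le_of_monotone {X ι : Type*} [TopologicalSpace X]
    [Preorder ι] {K : Set X} (hK : IsCompact K) {f : ι → X → ℝ}
    (hcont : ∀ i, ContinuousOn (f i) K) (hmono : ∀ x ∈ K, Monotone (f · x))
    (hunbdd : ∀ x ∈ K, ∀ R, ∃ i, R ≤ f i x) (R : ℝ) :
    ∀ᶠ i in atTop, ∀ x ∈ K, R ≤ f i x := by
  refine hK.induction_on (p := fun S => ∀ᶠ i in atTop, ∀ x ∈ S, R ≤ f i x)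
    (by simp) (fun S T hST hT => hT.mono fun i hi x hx => hi x (hST hx))
    (fun S T hS hT => (hS.and hT).mono fun i hi x hx => hx.elim (hi.1 x) (hi.2 x)) ?_
  intro x hx
  obtain ⟨i, hi⟩ := hunbdd x hx (R + 1)
  have hnear : ∀ᶠ z in 𝓝[K] x, z ∈ K ∧ R < f i z :=
    eventually_mem_nhdsWithin.and ((hcont i x hx).eventually (lt_mem_nhds (by linarith)))
  exact ⟨_, hnear, (eventually_ge_atTop i).mono fun j hij z hz =>
    hz.2.le.trans (hmono z hz.1 hij)⟩

lemma le_ctransform {α β : Type*} {c : α → β → ℝ} {Y : Set β} {ψ : β → ℝ} {x : α} {a : ℝ}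
    (hY : Y.Nonempty) (h : ∀ y ∈ Y, a ≤ c x y - ψ y) : a ≤ ctransform c Y ψ x :=
  le_csInf (hY.image _) (forall_mem_image.2 h)

lemma ctransform_le_ctransform {α β : Type*} {c : α → β → ℝ} {Y : Set β} {ψ : β → ℝ}
    {x x' : α} (hY : Y.Nonempty) (hbdd : BddBelow ((fun y => c x y - ψ y) '' Y))
    (hle : ∀ y ∈ Y, c x y ≤ c x' y) : ctransform c Y ψ x ≤ ctransform c Y ψ x' :=
  le_ctransform hY fun y hy => (csInf_le hbdd ⟨y, hy, rfl⟩).trans (by linarith [hle y hy])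

lemma IntervalIntegrable.add_mul_le_integral {f : ℝ → ℝ} {a b P t : ℝ}
    (hf : IntervalIntegrable f volume 0 t) (hP : 0 ≤ P) (hPt : P ≤ t)
    (ha : ∀ p ∈ Icc 0 P, a ≤ f p) (hb : ∀ p ∈ Icc P t, b ≤ f p) :
    P * a + (t - P) * b ≤ ∫ p in (0:ℝ)..t, f p := by
  have hf₁ : IntervalIntegrable f volume 0 P :=
    hf.mono_set (uIcc_subset_uIcc left_mem_uIcc (by simp [uIcc_of_le (hP.trans hPt), hP, hPt]))
  have hf₂ : IntervalIntegrable f volume P t :=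
    hf.mono_set (uIcc_subset_uIcc (by simp [uIcc_of_le (hP.trans hPt), hP, hPt]) right_mem_uIcc)
  rw [← intervalIntegral.integral_add_adjacent_intervals hf₁ hf₂]
  have h₁ := intervalIntegral.integral_mono_on hP intervalIntegrable_const hf₁ ha
  have h₂ := intervalIntegral.integral_mono_on hPt intervalIntegrable_const hf₂ hb
  simp only [intervalIntegral.integral_const, smul_eq_mul] at h₁ h₂
  linarith

namespace AssumptionA

variable {n : ℕ} {B : Set (EuclideanSpace ℝ (Fin n))} {Y : Set (ETgt n)}
  {c : ESrc n → ETgt n → ℝ}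

lemma continuousOn (hc : AssumptionA B Y c) :
    ContinuousOn (fun q : ESrc n × ETgt n => c q.1 q.2) ((B ×ˢ Ici 0) ×ˢ Y) :=
  LocallyLipschitzOn.continuousOn fun z hz => by
    obtain ⟨ε, hε, K, hK⟩ := hc.locLip z hz
    exact ⟨K, _, inter_mem_nhdsWithin _ (Metric.ball_mem_nhds z hε), hK⟩

lemma eventually_forall_le_cost (hc : AssumptionA B Y c) (hBc : IsCompact B)
    (hYc : IsCompact Y) (R : ℝ) :
    ∀ᶠ p in atTop, ∀ s ∈ B, ∀ y ∈ Y, R ≤ c (s, p) y := by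
  -- Clamping the height at `0` turns the family into one indexed monotonically by all of `ℝ`.
  have hcont (p : ℝ) : ContinuousOn (fun z => c (z.1, max p 0) z.2) (B ×ˢ Y) :=
    hc.continuousOn.comp
      (f := fun z : EuclideanSpace ℝ (Fin n) × ETgt n => ((z.1, max p 0), z.2)) (by fun_prop)
      fun z hz => ⟨⟨hz.1, le_max_right p 0⟩, hz.2⟩
  have hmono : ∀ z ∈ B ×ˢ Y, Monotone fun p => c (z.1, max p 0) z.2 := fun z hz p p' hpp' =>
    (hc.strictMonoOn z.1 hz.1 z.2 hz.2).monotoneOn (le_max_right p 0) (le_max_right p' 0)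
      (max_le_max_right 0 hpp')
  have hunbdd : ∀ z ∈ B ×ˢ Y, ∀ R, ∃ p, R ≤ c (z.1, max p 0) z.2 := fun z hz R => by
    obtain ⟨p, hp, hR⟩ := hc.unbounded z.1 hz.1 z.2 hz.2 R
    exact ⟨p, by rwa [max_eq_left hp]⟩
  filter_upwards [(hBc.prod hYc).eventually_forall_le_of_monotone hcont hmono hunbdd R,
    eventually_ge_atTop 0] with p hp hp0 s hs y hy
  simpa [max_eq_left hp0] using hp (s, y) ⟨hs, hy⟩

variable {ψ : ETgt n → ℝ} {C : ℝ}

lemma neg_le_cost_sub (hc : AssumptionA B Y c) (hC : ∀ y ∈ Y, ψ y ≤ C)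
    {s : EuclideanSpace ℝ (Fin n)} (hs : s ∈ B) {p : ℝ} (hp : 0 ≤ p) :
    ∀ y ∈ Y, -C ≤ c (s, p) y - ψ y := fun y hy => by
  linarith [hc.nonneg (s, p) ⟨hs, hp⟩ y hy, hC y hy]

lemma monotoneOn_ctransform (hc : AssumptionA B Y c) (hY : Y.Nonempty)
    (hC : ∀ y ∈ Y, ψ y ≤ C) {s : EuclideanSpace ℝ (Fin n)} (hs : s ∈ B) :
    MonotoneOn (fun p => ctransform c Y ψ (s, p)) (Ici 0) := fun _ hp _ hp' hpp' =>
  ctransform_le_ctransform hY ⟨-C, forall_mem_image.2 (hc.neg_le_cost_sub hC hs hp)⟩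
    fun y hy => (hc.strictMonoOn s hs y hy).monotoneOn hp hp' hpp'

end AssumptionA

theorem ctransform_average_tendsto_atTop_uniformly_general
    (n : ℕ)
    (B : Set (EuclideanSpace ℝ (Fin n))) (hBc : IsCompact B)
    (Y : Set (ETgt n)) (hYc : IsCompact Y) (hYne : Y.Nonempty)
    (c : ESrc n → ETgt n → ℝ) (hc : AssumptionA B Y c)
    (ψ : ETgt n → ℝ) (hψ : ContinuousOn ψ Y) :
    ∀ M : ℝ, 0 < M → ∃ T : ℝ, 0 < T ∧ ∀ t : ℝ, T ≤ t → ∀ s ∈ B,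
      M ≤ (1 / t) * ∫ p in (0:ℝ)..t, ctransform c Y ψ (s, p) := by
  intro M hM
  obtain ⟨C₀, hC₀⟩ := hYc.bddAbove_image hψ
  obtain ⟨C, hC, hC0⟩ : ∃ C, (∀ y ∈ Y, ψ y ≤ C) ∧ 0 ≤ C :=
    ⟨max C₀ 0, fun y hy => (hC₀ ⟨y, hy, rfl⟩).trans (le_max_left _ _), le_max_right _ _⟩
  obtain ⟨P, hP⟩ := eventually_atTop.1
    ((hc.eventually_forall_le_cost hBc hYc (M + 1 + C)).and (eventually_ge_atTop 0))
  have hP0 : 0 ≤ P := (hP P le_rfl).2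
  refine ⟨P * (M + 1 + C) + 1, by nlinarith, fun t ht s hs => ?_⟩
  have hPt : P ≤ t := by nlinarith
  have hmono := hc.monotoneOn_ctransform hYne hC hs
  have hint : IntervalIntegrable (fun p => ctransform c Y ψ (s, p)) volume 0 t :=
    (hmono.mono (by rw [uIcc_of_le (hP0.trans hPt)]; exact Icc_subset_Ici_self)).intervalIntegrable
  have hintegral := hint.add_mul_le_integral (a := -C) (b := M + 1) hP0 hPt
    (fun p hp => le_ctransform hYne (hc.neg_le_cost_sub hC hs hp.1))
    (fun p hp => le_ctransform hYne fun y hy => by linarith [(hP p hp.1).1 s hs y hy, hC y hy])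
  rw [one_div, ← div_eq_inv_mul, le_div_iff₀ (by nlinarith)]
  nlinarith

/-- Under Assumption A, for `ψ ∈ C(Y)`, the average
`(1/t) ∫_0^t ψ^c(s,p) dp` tends to `+∞` as `t → +∞`, uniformly in `s ∈ B`. -/
theorem ctransform_average_tendsto_atTop_uniformly
    (n : ℕ) (hn : 1 ≤ n)
    (B : Set (EuclideanSpace ℝ (Fin n))) (hBc : IsCompact B) (hBint : (interior B).Nonempty)
    (Y : Set (ETgt n)) (hYc : IsCompact Y) (hYne : Y.Nonempty)
    (c : ESrc n → ETgt n → ℝ) (hc : AssumptionA B Y c)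
    (ψ : ETgt n → ℝ) (hψ : ContinuousOn ψ Y) :
    ∀ M : ℝ, 0 < M → ∃ T : ℝ, 0 < T ∧ ∀ t : ℝ, T ≤ t → ∀ s ∈ B,
      M ≤ (1 / t) * ∫ p in (0:ℝ)..t, ctransform c Y ψ (s, p) :=
  ctransform_average_tendsto_atTop_uniformly_general n B hBc Y hYc hYne c hc ψ hψ
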